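/- Let d be an invariant metric on a gyrogroup G (d(a⊕x, a⊕y) = d(x,y) = d(x⊕a, y⊕a) for all a,x,y) and let (Ĝ, d̂) be the metric completion of (G,d). Then the gyrogroup operation extends to Ĝ: defining a⊕̂b as the limit of (a_n ⊕ b_n) for any sequences a_n → a, b_n → b in G, the operation is well defined, (Ĝ, ⊕̂) is a gyrogroup containing G as a subgyrogroup, and d̂ is invariant on Ĝ. -/
import Mathlib
set_option linter.unusedSectionVars false

open Filter Topology

universe u

class Gyrogroup (G : Type u) where
  op : G → G → G
  e : G
  neg : G → G
  gyr : G → G → G → G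
  op_left_id : ∀ x, op e x = x
  op_left_neg : ∀ x, op (neg x) x = e
  gyr_bijective : ∀ a b, Function.Bijective (gyr a b)
  gyr_op : ∀ a b x y, gyr a b (op x y) = op (gyr a b x) (gyr a b y)
  gyrassoc : ∀ x y z, op x (op y z) = op (op x y) (gyr x y z)
  left_loop : ∀ x y, gyr (op x y) y = gyr x y

open Gyrogroup

section Basic

variable {G : Type u} [Gyrogroup G]

lemma gy_op_left_inj (a : G) : Function.Injective (op a) := by
  intro x y hxy
  have h : ∀ z : G, op (neg a) (op a z) = gyr (neg a) a z := fun z => by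
    rw [gyrassoc, op_left_neg, op_left_id]
  have h2 : gyr (neg a) a x = gyr (neg a) a y := by
    rw [← h, ← h, hxy]
  exact (gyr_bijective (neg a) a).1 h2

lemma gy_gyr_e_left (a z : G) : gyr e a z = z := by
  have h := gyrassoc e a z
  rw [op_left_id, op_left_id] at h
  exact gy_op_left_inj a h.symm

lemma gy_gyr_neg_self (a z : G) : gyr (neg a) a z = z := by
  have h := left_loop (neg a) a
  rw [op_left_neg] at h
  rw [← h]
  exact gy_gyr_e_left a z

lemma gy_left_cancel (a z : G) : op (neg a) (op a z) = z := by
  rw [gyrassoc, op_left_neg, op_left_id, gy_gyr_neg_self]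

lemma gy_right_id (a : G) : op a e = a := by
  apply gy_op_left_inj (neg a)
  rw [gy_left_cancel, op_left_neg]

lemma gy_right_inv (a : G) : op a (neg a) = e := by
  apply gy_op_left_inj (neg a)
  rw [gy_left_cancel, gy_right_id]

lemma gy_gyr_self_neg (a z : G) : gyr a (neg a) z = z := by
  have h := left_loop a (neg a)
  rw [gy_right_inv] at h
  rw [← h]
  exact gy_gyr_e_left (neg a) z

lemma gy_left_cancel' (a z : G) : op a (op (neg a) z) = z := by
  rw [gyrassoc, gy_right_inv, op_left_id, gy_gyr_self_neg]

lemma gy_gyr_eq (a b z : G) : gyr a b z = op (neg (op a b)) (op a (op b z)) := by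
  conv_rhs => rw [gyrassoc a b z]
  rw [gy_left_cancel]

end Basic

section Comp

open UniformSpace UniformSpace.Completion

variable {G : Type u} [Gyrogroup G] [MetricSpace G]

noncomputable def oph : Completion G → Completion G → Completion G :=
  Completion.map₂ op

noncomputable def negh : Completion G → Completion G :=
  Completion.map neg

noncomputable def gyrh (a b c : Completion G) : Completion G :=
  oph (negh (oph a b)) (oph a (oph b c))

noncomputable def gyrh' (a b d : Completion G) : Completion G :=
  oph (negh b) (oph (negh a) (oph (oph a b) d))

lemma oph_cont : Continuous fun p : Completion G × Completion G => oph p.1 p.2 :=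
  (Completion.uniformContinuous_map₂ op).continuous

lemma negh_cont : Continuous (negh : Completion G → Completion G) :=
  Completion.continuous_map

lemma cont_oph {α : Type*} [TopologicalSpace α] {f g : α → Completion G}
    (hf : Continuous f) (hg : Continuous g) : Continuous fun x => oph (f x) (g x) :=
  oph_cont.comp (hf.prodMk hg)

lemma cont_negh {α : Type*} [TopologicalSpace α] {f : α → Completion G}
    (hf : Continuous f) : Continuous fun x => negh (f x) :=
  negh_cont.comp hf

-- extensionality by density
variable {β : Type*} [TopologicalSpace β] [T2Space β]

lemma gy_ext1 {f g : Completion G → β} (hf : Continuous f) (hg : Continuous g)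
    (h : ∀ a : G, f ↑a = g ↑a) : ∀ x, f x = g x :=
  fun x => congrFun (Completion.denseRange_coe.equalizer hf hg (funext h)) x

lemma gy_ext2 {f g : Completion G → Completion G → β}
    (hf : Continuous fun p : Completion G × Completion G => f p.1 p.2)
    (hg : Continuous fun p : Completion G × Completion G => g p.1 p.2)
    (h : ∀ a b : G, f ↑a ↑b = g ↑a ↑b) : ∀ x y, f x y = g x y := by
  have hd : DenseRange fun p : G × G => ((↑p.1 : Completion G), (↑p.2 : Completion G)) :=
    Completion.denseRange_coe.prodMap Completion.denseRange_coe
  have := hd.equalizer hf hg (funext fun p => h p.1 p.2)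
  exact fun x y => congrFun this (x, y)

lemma gy_ext3 {f g : Completion G → Completion G → Completion G → β}
    (hf : Continuous fun p : Completion G × Completion G × Completion G => f p.1 p.2.1 p.2.2)
    (hg : Continuous fun p : Completion G × Completion G × Completion G => g p.1 p.2.1 p.2.2)
    (h : ∀ a b c : G, f ↑a ↑b ↑c = g ↑a ↑b ↑c) : ∀ x y z, f x y z = g x y z := by
  have hd : DenseRange fun p : G × G × G =>
      ((↑p.1 : Completion G), (↑p.2.1 : Completion G), (↑p.2.2 : Completion G)) :=
    Completion.denseRange_coe.prodMap
      (Completion.denseRange_coe.prodMap Completion.denseRange_coe)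
  have := hd.equalizer hf hg (funext fun p => h p.1 p.2.1 p.2.2)
  exact fun x y z => congrFun this (x, y, z)

lemma gy_ext4 {f g : Completion G → Completion G → Completion G → Completion G → β}
    (hf : Continuous fun p : Completion G × Completion G × Completion G × Completion G =>
      f p.1 p.2.1 p.2.2.1 p.2.2.2)
    (hg : Continuous fun p : Completion G × Completion G × Completion G × Completion G =>
      g p.1 p.2.1 p.2.2.1 p.2.2.2)
    (h : ∀ a b c d : G, f ↑a ↑b ↑c ↑d = g ↑a ↑b ↑c ↑d) : ∀ x y z w, f x y z w = g x y z w := by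
  have hd : DenseRange fun p : G × G × G × G =>
      ((↑p.1 : Completion G), (↑p.2.1 : Completion G), (↑p.2.2.1 : Completion G),
        (↑p.2.2.2 : Completion G)) :=
    Completion.denseRange_coe.prodMap (Completion.denseRange_coe.prodMap
      (Completion.denseRange_coe.prodMap Completion.denseRange_coe))
  have := hd.equalizer hf hg (funext fun p => h p.1 p.2.1 p.2.2.1 p.2.2.2)
  exact fun x y z w => congrFun this (x, y, z, w)

end Comp

section Comp2

open UniformSpace UniformSpace.Completion

variable {G : Type u} [Gyrogroup G] [MetricSpace G]
variable (h2 : UniformContinuous₂ (op : G → G → G)) (hn : UniformContinuous (neg : G → G))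

include h2 hn

lemma oph_coe (a b : G) : oph (↑a : Completion G) ↑b = ↑(op a b) :=
  Completion.map₂_coe_coe a b op h2

lemma negh_coe (a : G) : negh (↑a : Completion G) = ↑(neg a) :=
  Completion.map_coe hn a

lemma gyrh_coe (a b c : G) : gyrh (↑a : Completion G) ↑b ↑c = ↑(gyr a b c) := by
  rw [gyrh, oph_coe h2 hn, oph_coe h2 hn, oph_coe h2 hn, negh_coe h2 hn, oph_coe h2 hn, ← gy_gyr_eq]

lemma hop_left_id : ∀ x : Completion G, oph ↑(e : G) x = x := by
  apply gy_ext1 (cont_oph continuous_const continuous_id) continuous_id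
  intro a
  simp only [id_eq]
  rw [oph_coe h2 hn, op_left_id]

lemma hop_left_neg : ∀ x : Completion G, oph (negh x) x = ↑(e : G) := by
  apply gy_ext1 (cont_oph (cont_negh continuous_id) continuous_id) continuous_const
  intro a
  simp only [id_eq]
  rw [negh_coe h2 hn, oph_coe h2 hn, op_left_neg]

lemma hcancel1 : ∀ u w : Completion G, oph (negh u) (oph u w) = w := by
  apply gy_ext2
  · exact cont_oph (cont_negh continuous_fst) (cont_oph continuous_fst continuous_snd)
  · exact continuous_snd
  · intro a b
    rw [negh_coe h2 hn, oph_coe h2 hn, oph_coe h2 hn, gy_left_cancel]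

lemma hcancel2 : ∀ u w : Completion G, oph u (oph (negh u) w) = w := by
  apply gy_ext2
  · exact cont_oph continuous_fst (cont_oph (cont_negh continuous_fst) continuous_snd)
  · exact continuous_snd
  · intro a b
    rw [negh_coe h2 hn, oph_coe h2 hn, oph_coe h2 hn, gy_left_cancel']

lemma hgyr_bij (a b : Completion G) : Function.Bijective (gyrh a b) := by
  have hl : ∀ c, gyrh' a b (gyrh a b c) = c := by
    intro c
    rw [gyrh, gyrh', hcancel2 h2 hn (oph a b), hcancel1 h2 hn a, hcancel1 h2 hn b]
  have hr : ∀ d, gyrh a b (gyrh' a b d) = d := by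
    intro d
    rw [gyrh', gyrh, hcancel2 h2 hn b, hcancel2 h2 hn a, hcancel1 h2 hn (oph a b)]
  exact ⟨Function.LeftInverse.injective hl, Function.RightInverse.surjective hr⟩

lemma hgyr_op : ∀ a b x y : Completion G,
    gyrh a b (oph x y) = oph (gyrh a b x) (gyrh a b y) := by
  apply gy_ext4
  · apply cont_oph (cont_negh (cont_oph continuous_fst (continuous_fst.comp continuous_snd)))
    exact cont_oph continuous_fst (cont_oph (continuous_fst.comp continuous_snd)
      (cont_oph (continuous_fst.comp (continuous_snd.comp continuous_snd))
        (continuous_snd.comp (continuous_snd.comp continuous_snd))))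
  · have c1 : Continuous fun p : Completion G × Completion G × Completion G × Completion G =>
        gyrh p.1 p.2.1 p.2.2.1 := by
      apply cont_oph (cont_negh (cont_oph continuous_fst (continuous_fst.comp continuous_snd)))
      exact cont_oph continuous_fst (cont_oph (continuous_fst.comp continuous_snd)
        (continuous_fst.comp (continuous_snd.comp continuous_snd)))
    have c2 : Continuous fun p : Completion G × Completion G × Completion G × Completion G =>
        gyrh p.1 p.2.1 p.2.2.2 := by
      apply cont_oph (cont_negh (cont_oph continuous_fst (continuous_fst.comp continuous_snd)))
      exact cont_oph continuous_fst (cont_oph (continuous_fst.comp continuous_snd)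
        (continuous_snd.comp (continuous_snd.comp continuous_snd)))
    exact cont_oph c1 c2
  · intro a b x y
    rw [oph_coe h2 hn, gyrh_coe h2 hn, gyrh_coe h2 hn, gyrh_coe h2 hn, oph_coe h2 hn, gyr_op]

lemma hgyrassoc : ∀ x y z : Completion G,
    oph x (oph y z) = oph (oph x y) (gyrh x y z) := by
  apply gy_ext3
  · exact cont_oph continuous_fst (cont_oph (continuous_fst.comp continuous_snd)
      (continuous_snd.comp continuous_snd))
  · refine cont_oph (cont_oph continuous_fst (continuous_fst.comp continuous_snd)) ?_
    apply cont_oph (cont_negh (cont_oph continuous_fst (continuous_fst.comp continuous_snd)))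
    exact cont_oph continuous_fst (cont_oph (continuous_fst.comp continuous_snd)
      (continuous_snd.comp continuous_snd))
  · intro a b c
    rw [oph_coe h2 hn, oph_coe h2 hn, gyrh_coe h2 hn, oph_coe h2 hn, oph_coe h2 hn, gyrassoc]

lemma hleft_loop : ∀ x y z : Completion G, gyrh (oph x y) y z = gyrh x y z := by
  apply gy_ext3
  · have cxy : Continuous fun p : Completion G × Completion G × Completion G =>
        oph p.1 p.2.1 := cont_oph continuous_fst (continuous_fst.comp continuous_snd)
    apply cont_oph (cont_negh (cont_oph cxy (continuous_fst.comp continuous_snd)))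
    exact cont_oph cxy (cont_oph (continuous_fst.comp continuous_snd)
      (continuous_snd.comp continuous_snd))
  · apply cont_oph (cont_negh (cont_oph continuous_fst (continuous_fst.comp continuous_snd)))
    exact cont_oph continuous_fst (cont_oph (continuous_fst.comp continuous_snd)
      (continuous_snd.comp continuous_snd))
  · intro a b c
    rw [oph_coe h2 hn, gyrh_coe h2 hn, gyrh_coe h2 hn]
    exact congrArg _ (congrFun (left_loop a b) c)

noncomputable def gyroCompletion : Gyrogroup (Completion G) where
  op := oph
  e := ↑(e : G)
  neg := negh
  gyr := gyrh
  op_left_id := hop_left_id h2 hn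
  op_left_neg := hop_left_neg h2 hn
  gyr_bijective := hgyr_bij h2 hn
  gyr_op := hgyr_op h2 hn
  gyrassoc := hgyrassoc h2 hn
  left_loop := by
    intro x y
    exact funext fun z => hleft_loop h2 hn x y z

end Comp2

theorem gyrogroup_metric_completion {G : Type u} [Gyrogroup G] [MetricSpace G]
    (hinv : ∀ a x y : G, dist (op a x) (op a y) = dist x y ∧ dist (op x a) (op y a) = dist x y) :
    ∃ H : Gyrogroup (UniformSpace.Completion G),
      -- the extended operation restricts to the original one on `G`
      (∀ a b : G, H.op (a : UniformSpace.Completion G) (b : UniformSpace.Completion G)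
        = ((op a b : G) : UniformSpace.Completion G)) ∧
      -- the extended operation is the limit operation: it is well defined by limits
      (∀ (a b : UniformSpace.Completion G) (an bn : ℕ → G),
        Filter.Tendsto (fun n => ((an n : G) : UniformSpace.Completion G)) Filter.atTop (nhds a) →
        Filter.Tendsto (fun n => ((bn n : G) : UniformSpace.Completion G)) Filter.atTop (nhds b) →
        Filter.Tendsto (fun n => ((op (an n) (bn n) : G) : UniformSpace.Completion G))
          Filter.atTop (nhds (H.op a b))) ∧
      -- the completed metric is invariant on the completion
      (∀ a x y : UniformSpace.Completion G,
        dist (H.op a x) (H.op a y) = dist x y ∧ dist (H.op x a) (H.op y a) = dist x y) := by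
  -- uniform continuity of the operation
  have h2 : UniformContinuous₂ (op : G → G → G) := by
    have hlip : LipschitzWith 2 (fun p : G × G => op p.1 p.2) := by
      apply LipschitzWith.of_dist_le_mul
      intro p q
      have h1 : dist p.1 q.1 ≤ dist p q := by rw [Prod.dist_eq]; exact le_max_left _ _
      have hsnd : dist p.2 q.2 ≤ dist p q := by rw [Prod.dist_eq]; exact le_max_right _ _
      calc dist (op p.1 p.2) (op q.1 q.2)
          ≤ dist (op p.1 p.2) (op p.1 q.2) + dist (op p.1 q.2) (op q.1 q.2) :=
            dist_triangle _ _ _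
        _ = dist p.2 q.2 + dist p.1 q.1 := by rw [(hinv p.1 p.2 q.2).1, (hinv q.2 p.1 q.1).2]
        _ ≤ dist p q + dist p q := add_le_add hsnd h1
        _ = ((2 : NNReal) : ℝ) * dist p q := by push_cast; ring
    exact hlip.uniformContinuous
  -- negation is an isometry
  have hnd : ∀ x y : G, dist (neg x) (neg y) = dist x y := by
    intro x y
    have e1 : dist (neg x) (neg y) = dist (op (neg x) y) (op (neg y) y) :=
      ((hinv y (neg x) (neg y)).2).symm
    rw [op_left_neg] at e1
    have e2 : dist (op (neg x) y) (op (neg x) x) = dist y x := (hinv (neg x) y x).1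
    rw [op_left_neg] at e2
    rw [e1, e2, dist_comm]
  have hn : UniformContinuous (neg : G → G) := by
    have hlip : LipschitzWith 1 (neg : G → G) := by
      apply LipschitzWith.of_dist_le_mul
      intro x y
      rw [hnd x y]
      simp
    exact hlip.uniformContinuous
  refine ⟨gyroCompletion h2 hn, ?_, ?_, ?_⟩
  · intro a b
    exact oph_coe h2 hn a b
  · intro a b an bn ha hb
    have hlim : Filter.Tendsto
        (fun n => oph ((an n : G) : UniformSpace.Completion G) ((bn n : G) : _))
        Filter.atTop (nhds (oph a b)) :=
      (oph_cont.tendsto (a, b)).comp (ha.prodMk_nhds hb)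
    show Filter.Tendsto (fun n => ((op (an n) (bn n) : G) : UniformSpace.Completion G))
      Filter.atTop (nhds (oph a b))
    simpa only [oph_coe h2 hn] using hlim
  · have hleft : ∀ a x y : UniformSpace.Completion G, dist (oph a x) (oph a y) = dist x y := by
      apply gy_ext3
      · exact Continuous.dist
          (cont_oph continuous_fst (continuous_fst.comp continuous_snd))
          (cont_oph continuous_fst (continuous_snd.comp continuous_snd))
      · exact Continuous.dist (continuous_fst.comp continuous_snd)
          (continuous_snd.comp continuous_snd)
      · intro a x y
        rw [oph_coe h2 hn, oph_coe h2 hn, UniformSpace.Completion.dist_eq,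
          UniformSpace.Completion.dist_eq]
        exact (hinv a x y).1
    have hright : ∀ a x y : UniformSpace.Completion G, dist (oph x a) (oph y a) = dist x y := by
      apply gy_ext3
      · exact Continuous.dist
          (cont_oph (continuous_fst.comp continuous_snd) continuous_fst)
          (cont_oph (continuous_snd.comp continuous_snd) continuous_fst)
      · exact Continuous.dist (continuous_fst.comp continuous_snd)
          (continuous_snd.comp continuous_snd)
      · intro a x y
        rw [oph_coe h2 hn, oph_coe h2 hn, UniformSpace.Completion.dist_eq,
          UniformSpace.Completion.dist_eq]
        exact (hinv a x y).2
    intro a x y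
    exact ⟨hleft a x y, hright a x y⟩
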